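/- Let k be a field and A = k[X,Y]. No variable of A is a rectangular element of A. In particular, if F ∈ A and A = k[F,G] for some G ∈ A, then for every coordinate system (U,V) of A there do not exist m,n ≥ 1 with (m,n) in the support of F with respect to (U,V) and the support contained in [0,m] × [0,n]. -/

import Mathlib

/-!
If `H = φ X` for an automorphism `φ` of `R[X, Y]`, then `θ = (X ↦ 0, Y ↦ T) ∘ φ⁻¹` from
`R[X, Y]` to `R[T]` kills `H`, and whatever `θ` kills is a multiple of `H`. With `p = θ X` and
`q = θ Y` we get `H(p, q) = 0`. If `p` were a constant `c`, then `H` would divide `X - c`, which is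
impossible for a rectangular `H` with corner `(m, n)`, `m, n ≥ 1`, since its total degree is at
least `m + n ≥ 2`; likewise for `q`. So `p` and `q` are nonconstant, and then the corner monomial
`X^m Y^n` is the only one reaching degree `m deg p + n deg q` in `H(p, q)`, so `H(p, q) ≠ 0`.

A variable `F` with `k[F, G] = k[X, Y]` is the image of `X` under the surjective, hence (Noetherian
ring) bijective, endomorphism `(X, Y) ↦ (F, G)`.
-/

theorem RingHom.injective_of_surjective_of_isNoetherianRing {R : Type*} [CommRing R]
    [IsNoetherianRing R] (f : R →+* R) (hf : Function.Surjective f) : Function.Injective f := by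
  have hmono : Monotone fun n => RingHom.ker (f ^ n) := by
    refine monotone_nat_of_le_succ fun n x hx => ?_
    simp_all [RingHom.mem_ker, pow_succ']
  obtain ⟨N, hN⟩ := monotone_stabilizes_iff_noetherian.mpr inferInstance ⟨_, hmono⟩
  refine (injective_iff_map_eq_zero f).mpr fun x hx => ?_
  obtain ⟨y, rfl⟩ := (hf.iterate N) x
  have hker : RingHom.ker (f ^ N) = RingHom.ker (f ^ (N + 1)) := hN (N + 1) N.le_succ
  have hy : y ∈ RingHom.ker (f ^ (N + 1)) := by
    simpa [RingHom.mem_ker, pow_succ', Function.iterate_succ_apply'] using hx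
  simpa [← hker, RingHom.mem_ker] using hy

namespace MvPolynomial

variable {R σ : Type*} [CommRing R]

/-- The paper's rectangular elements with corner `(m, n)` are those with
`IsRectangular (single 0 m + single 1 n)`. -/
def IsRectangular (D : σ →₀ ℕ) (P : MvPolynomial σ R) : Prop :=
  D ∈ P.support ∧ ∀ d ∈ P.support, d ≤ D

theorem IsRectangular.degree_le_totalDegree {D : σ →₀ ℕ} {P : MvPolynomial σ R}
    (hP : IsRectangular D P) : D.degree ≤ P.totalDegree :=
  le_totalDegree hP.1

theorem IsRectangular.aeval_ne_zero [IsDomain R] [Fintype σ] {D : σ →₀ ℕ}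
    {P : MvPolynomial σ R} (hP : IsRectangular D P) {x : σ → Polynomial R}
    (hx : ∀ i, 0 < (x i).natDegree) : aeval x P ≠ 0 := by
  have hx0 : ∀ i, x i ≠ 0 := fun i h => by simpa [h] using hx i
  set N := ∑ i, D i * (x i).natDegree
  have hlt : ∀ d ∈ P.support, d ≠ D → (∏ i, x i ^ d i).natDegree < N := by
    intro d hd hne
    obtain ⟨j, hj⟩ : ∃ j, d j < D j := by
      by_contra! h
      exact hne (le_antisymm (hP.2 d hd) h)
    calc (∏ i, x i ^ d i).natDegree
        ≤ ∑ i, (x i ^ d i).natDegree := Polynomial.natDegree_prod_le _ _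
      _ ≤ ∑ i, d i * (x i).natDegree := Finset.sum_le_sum fun i _ => Polynomial.natDegree_pow_le
      _ < N := Finset.sum_lt_sum (fun i _ => Nat.mul_le_mul_right _ (hP.2 d hd i))
          ⟨j, Finset.mem_univ _, Nat.mul_lt_mul_of_lt_of_le hj le_rfl (hx j)⟩
  have hcorner : (∏ i, x i ^ D i).coeff N = ∏ i, (x i).leadingCoeff ^ D i := by
    have hdeg : (∏ i, x i ^ D i).natDegree = N := by
      rw [Polynomial.natDegree_prod _ _ fun i _ => pow_ne_zero _ (hx0 i)]
      simp [N, Polynomial.natDegree_pow, mul_comm]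
    rw [← hdeg, Polynomial.coeff_natDegree, Polynomial.leadingCoeff_prod]
    simp [Polynomial.leadingCoeff_pow]
  intro h
  have hN := congrArg (Polynomial.coeff · N) h
  simp only [aeval_def, eval₂_eq', Polynomial.finsetSum_coeff, Polynomial.algebraMap_eq,
    Polynomial.coeff_C_mul, Polynomial.coeff_zero] at hN
  rw [Finset.sum_eq_single_of_mem D hP.1 fun d hd hne => by
    rw [Polynomial.coeff_eq_zero_of_natDegree_lt (hlt d hd hne), mul_zero], hcorner] at hN
  exact mul_ne_zero (mem_support_iff.mp hP.1) (Finset.prod_ne_zero_iff.mpr fun i _ =>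
    pow_ne_zero _ (Polynomial.leadingCoeff_ne_zero.mpr (hx0 i))) hN

theorem X_dvd_sub_aeval_update_zero [DecidableEq σ] (p : MvPolynomial σ R) (i : σ) :
    X i ∣ p - aeval (Function.update X i 0) p := by
  induction p using MvPolynomial.induction_on with
  | C a => simp
  | add p q hp hq => simpa [add_sub_add_comm] using dvd_add hp hq
  | mul_X p j ih =>
    rcases eq_or_ne j i with rfl | hj
    · simp
    · simpa [Function.update_of_ne hj, ← sub_mul] using dvd_mul_of_dvd_left ih (X j)

theorem X_zero_dvd_of_aeval_eq_zero {y : MvPolynomial (Fin 2) R}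
    (h : aeval ![(0 : Polynomial R), Polynomial.X] y = 0) : X 0 ∣ y := by
  have hfactor : aeval (Function.update (X (R := R)) 0 0) y =
      Polynomial.aeval (X 1) (aeval ![(0 : Polynomial R), Polynomial.X] y) := by
    rw [← AlgHom.comp_apply]
    congr 1
    ext i
    fin_cases i <;> simp
  have hdvd := X_dvd_sub_aeval_update_zero y 0
  rwa [hfactor, h, map_zero, sub_zero] at hdvd

theorem not_dvd_X_sub_C_of_two_le_totalDegree [IsDomain R] {P : MvPolynomial σ R}
    (hP : 2 ≤ P.totalDegree) (i : σ) (c : R) : ¬ P ∣ X i - C c := by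
  intro h
  have hne : X i - C c ≠ 0 := fun h0 => by
    simpa [sub_eq_zero.mp h0] using totalDegree_X (R := R) i
  have hle := totalDegree_le_of_dvd_of_isDomain h hne
  have : (X i - C c : MvPolynomial σ R).totalDegree ≤ 1 :=
    (totalDegree_sub_C_le _ _).trans (totalDegree_X i).le
  omega

theorem not_isRectangular_algEquiv_X_zero [IsDomain R]
    (φ : MvPolynomial (Fin 2) R ≃ₐ[R] MvPolynomial (Fin 2) R) {D : Fin 2 →₀ ℕ}
    (hD : 2 ≤ D.degree) : ¬ IsRectangular D (φ (X 0)) := by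
  intro hrect
  let θ : MvPolynomial (Fin 2) R →ₐ[R] Polynomial R :=
    (aeval ![0, Polynomial.X]).comp φ.symm.toAlgHom
  have hdvd : ∀ y, θ y = 0 → φ (X 0) ∣ y := fun y hy => by
    simpa using map_dvd φ (X_zero_dvd_of_aeval_eq_zero hy)
  have hdeg : ∀ i, 0 < (θ (X i)).natDegree := by
    intro i
    by_contra! h
    refine not_dvd_X_sub_C_of_two_le_totalDegree (hD.trans hrect.degree_le_totalDegree) i
      ((θ (X i)).coeff 0) (hdvd _ ?_)
    rw [map_sub, Polynomial.eq_C_of_natDegree_eq_zero (Nat.le_zero.mp h)]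
    simp
  refine hrect.aeval_ne_zero hdeg ?_
  change aeval (θ ∘ X) (φ (X 0)) = 0
  rw [← aeval_unique θ]
  simp [θ]

end MvPolynomial

open MvPolynomial

/-- No variable of `A = k[X,Y]` is a rectangular element of `A`: if
`A = k[F,G]` then for every coordinate system `(U,V)` of `A` there are no `m,n ≥ 1`
with `(m,n)` in the support of `F` w.r.t. `(U,V)` and the support contained in `[0,m]×[0,n]`. -/
theorem stmt5 (k : Type) [Field k] (F G : MvPolynomial (Fin 2) k)
    (hvar : Algebra.adjoin k ({F, G} : Set (MvPolynomial (Fin 2) k)) = ⊤) :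
    ∀ U V G' : MvPolynomial (Fin 2) k,
      Function.Bijective ⇑(MvPolynomial.aeval (R := k) ![U, V]) →
      MvPolynomial.aeval ![U, V] G' = F →
      ∀ m n : ℕ, 1 ≤ m → 1 ≤ n →
        ¬ (MvPolynomial.coeff (Finsupp.single 0 m + Finsupp.single 1 n) G' ≠ 0 ∧
            ∀ d ∈ G'.support, d 0 ≤ m ∧ d 1 ≤ n) := by
  intro U V G' hUV hG' m n hm hn ⟨hcorner, hbox⟩
  have hFG : Function.Surjective (aeval (R := k) ![F, G]) := by
    rw [← AlgHom.range_eq_top, ← Algebra.adjoin_range_eq_range_aeval,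
      Matrix.range_cons_cons_empty, hvar]
  let φ := (AlgEquiv.ofBijective _
    ⟨RingHom.injective_of_surjective_of_isNoetherianRing _ hFG, hFG⟩).trans
    (AlgEquiv.ofBijective _ hUV).symm
  have hφ : φ (X 0) = G' := by
    rw [AlgEquiv.trans_apply, AlgEquiv.symm_apply_eq]
    exact (aeval_X _ 0).trans hG'.symm
  refine not_isRectangular_algEquiv_X_zero φ (D := Finsupp.single 0 m + Finsupp.single 1 n)
    (by simp; omega) ?_
  rw [hφ]
  refine ⟨mem_support_iff.mpr hcorner, fun d hd => ?_⟩
  simp [Finsupp.le_def, Fin.forall_fin_two, hbox d hd]
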